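/- Let p be a positive integer, μ, λ ∈ ℝᵖ, Σ a positive definite p×p real matrix, and H a probability measure on (0,∞). Let ν_Y be the measure on ℝᵖ with density f(y) = 2 ∫_0^∞ φ_p(y; μ, u⁻¹Σ) Φ(u^{1/2} λᵀ Σ^{−1/2}(y−μ)) dH(u) (the SMSN_p(μ,Σ,λ;H) law) and let ν_X be the measure on ℝᵖ with density f₀(y) = ∫_0^∞ φ_p(y; μ, u⁻¹Σ) dH(u) (the SMN_p(μ,Σ;H) law). Then the pushforward of ν_Y under the Mahalanobis distance map y ↦ (y−μ)ᵀ Σ⁻¹ (y−μ) equals the pushforward of ν_X under the same map. -/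

import Mathlib

open MeasureTheory Matrix Real Set

/-- The `p`-variate normal density with mean `μ` and covariance matrix `S`. -/
noncomputable def gaussPdf {p : ℕ} (μ : Fin p → ℝ) (S : Matrix (Fin p) (Fin p) ℝ)
    (x : Fin p → ℝ) : ℝ :=
  (2 * Real.pi) ^ (-(p : ℝ) / 2) * S.det ^ (-(1 : ℝ) / 2) *
    Real.exp (-(1 / 2) * ((x - μ) ⬝ᵥ (S⁻¹ *ᵥ (x - μ))))

/-- The standard normal cumulative distribution function `Φ`. -/
noncomputable def stdNormCdf (x : ℝ) : ℝ :=
  ∫ t in Set.Iic x, (2 * Real.pi) ^ (-(1 : ℝ) / 2) * Real.exp (-t ^ 2 / 2)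

/-- The `SMSN_p(μ, S, lam; H)` density, where `S^{-1/2}` is the inverse of the unique
symmetric positive definite square root of `S`. -/
noncomputable def smsnPdf {p : ℕ} (μ lam : Fin p → ℝ) (S : Matrix (Fin p) (Fin p) ℝ)
    (hS : S.PosDef) (H : MeasureTheory.Measure ℝ) (y : Fin p → ℝ) : ℝ :=
  2 * ∫ u, gaussPdf μ (u⁻¹ • S) y *
      stdNormCdf (Real.sqrt u * (lam ⬝ᵥ (((hS.posSemidef.1.eigenvectorUnitary : Matrix (Fin p) (Fin p) ℝ) *
        diagonal (fun i => Real.sqrt (hS.posSemidef.1.eigenvalues i)) *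
        star (hS.posSemidef.1.eigenvectorUnitary : Matrix (Fin p) (Fin p) ℝ))⁻¹ *ᵥ (y - μ)))) ∂H

/-- The `SMN_p(μ, S; H)` density. -/
noncomputable def smnPdf {p : ℕ} (μ : Fin p → ℝ) (S : Matrix (Fin p) (Fin p) ℝ)
    (H : MeasureTheory.Measure ℝ) (y : Fin p → ℝ) : ℝ :=
  ∫ u, gaussPdf μ (u⁻¹ • S) y ∂H

/-! ### Auxiliary lemmas about the standard normal cdf -/

lemma normd_integrable :
    Integrable (fun t : ℝ => (2 * Real.pi) ^ (-(1 : ℝ) / 2) * Real.exp (-t ^ 2 / 2)) := by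
  have h : Integrable (fun t : ℝ => Real.exp (-(1/2) * t ^ 2)) :=
    integrable_exp_neg_mul_sq (by norm_num)
  refine (h.const_mul ((2 * Real.pi) ^ (-(1 : ℝ) / 2))).congr ?_
  filter_upwards with t
  ring_nf

lemma stdNormCdf_nonneg (x : ℝ) : 0 ≤ stdNormCdf x := by
  refine setIntegral_nonneg measurableSet_Iic fun t _ => ?_
  positivity

lemma stdNormCdf_add_neg (x : ℝ) : stdNormCdf x + stdNormCdf (-x) = 1 := by
  have h1 : stdNormCdf (-x)
      = ∫ t in Set.Ioi x, (2 * Real.pi) ^ (-(1 : ℝ) / 2) * Real.exp (-t ^ 2 / 2) := by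
    rw [stdNormCdf]
    have := integral_comp_neg_Iic (-x)
      (fun t : ℝ => (2 * Real.pi) ^ (-(1 : ℝ) / 2) * Real.exp (-t ^ 2 / 2))
    rw [neg_neg] at this
    rw [← this]
    congr 1
    ext t
    ring_nf
  rw [h1, stdNormCdf,
    intervalIntegral.integral_Iic_add_Ioi normd_integrable.integrableOn
      normd_integrable.integrableOn,
    MeasureTheory.integral_const_mul]
  have h3 : ∫ t : ℝ, Real.exp (-t ^ 2 / 2) = Real.sqrt (2 * Real.pi) := by
    have h := integral_gaussian (1/2)
    rw [show (Real.pi / (1/2)) = 2 * Real.pi by ring] at h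
    rw [← h]
    congr 1; ext t; ring_nf
  rw [h3, Real.sqrt_eq_rpow, ← Real.rpow_add (by positivity)]
  norm_num

lemma stdNormCdf_le_one (x : ℝ) : stdNormCdf x ≤ 1 := by
  have h1 := stdNormCdf_add_neg x
  have h2 := stdNormCdf_nonneg (-x)
  linarith

lemma stdNormCdf_mono : Monotone stdNormCdf := by
  intro a b hab
  refine setIntegral_mono_set normd_integrable.integrableOn ?_
    (HasSubset.Subset.eventuallyLE (Iic_subset_Iic.mpr hab))
  filter_upwards with t
  positivity

lemma measurable_stdNormCdf : Measurable stdNormCdf := stdNormCdf_mono.measurable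

/-! ### Auxiliary lemmas about the Gaussian density -/

lemma rpow_neg_half_nonneg (d : ℝ) : 0 ≤ d ^ (-(1:ℝ)/2) := by
  rcases le_or_gt 0 d with h | h
  · exact Real.rpow_nonneg h _
  · rw [Real.rpow_def_of_neg h]
    have hc : Real.cos (-(1:ℝ)/2 * Real.pi) = 0 := by
      rw [show (-(1:ℝ)/2) * Real.pi = -(Real.pi/2) by ring, Real.cos_neg, Real.cos_pi_div_two]
    rw [hc, mul_zero]

lemma gaussPdf_nonneg {p : ℕ} (μ : Fin p → ℝ) (S : Matrix (Fin p) (Fin p) ℝ) (x : Fin p → ℝ) :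
    0 ≤ gaussPdf μ S x := by
  unfold gaussPdf
  have h1 : (0:ℝ) ≤ (2 * Real.pi) ^ (-(p : ℝ) / 2) := Real.rpow_nonneg (by positivity) _
  exact mul_nonneg (mul_nonneg h1 (rpow_neg_half_nonneg _)) (Real.exp_nonneg _)

lemma inv_smul_eq {p : ℕ} (hp : 0 < p) (S : Matrix (Fin p) (Fin p) ℝ) (hS : S.PosDef) (u : ℝ) :
    (u⁻¹ • S)⁻¹ = u • S⁻¹ := by
  have : Nonempty (Fin p) := Fin.pos_iff_nonempty.mp hp
  rcases eq_or_ne u 0 with rfl | hu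
  · simp [Matrix.inv_def, Matrix.det_zero]
  · apply Matrix.inv_eq_right_inv
    rw [Matrix.smul_mul, Matrix.mul_smul, smul_smul, inv_mul_cancel₀ hu,
      Matrix.mul_nonsing_inv S hS.det_pos.ne'.isUnit]
    simp

lemma gaussPdf_formula {p : ℕ} (hp : 0 < p) (μ : Fin p → ℝ) (S : Matrix (Fin p) (Fin p) ℝ)
    (hS : S.PosDef) (u : ℝ) (y : Fin p → ℝ) :
    gaussPdf μ (u⁻¹ • S) y = (2 * Real.pi) ^ (-(p : ℝ) / 2) * ((u⁻¹)^p * S.det) ^ (-(1 : ℝ) / 2) *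
      Real.exp (-(1 / 2) * (u * ((y - μ) ⬝ᵥ (S⁻¹ *ᵥ (y - μ))))) := by
  unfold gaussPdf
  rw [Matrix.det_smul, Fintype.card_fin, inv_smul_eq hp S hS, smul_mulVec,
    dotProduct_smul]
  simp [smul_eq_mul]

lemma gaussPdf_reflect {p : ℕ} (μ : Fin p → ℝ) (S : Matrix (Fin p) (Fin p) ℝ) (y : Fin p → ℝ) :
    gaussPdf μ S (μ + μ - y) = gaussPdf μ S y := by
  unfold gaussPdf
  have h : μ + μ - y - μ = -(y - μ) := by abel
  rw [h, Matrix.mulVec_neg, neg_dotProduct, dotProduct_neg, neg_neg]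

lemma reflect_sub {p : ℕ} (μ y : Fin p → ℝ) (B : Matrix (Fin p) (Fin p) ℝ) (lam : Fin p → ℝ) :
    lam ⬝ᵥ (B *ᵥ (μ + μ - y - μ)) = -(lam ⬝ᵥ (B *ᵥ (y - μ))) := by
  have h : μ + μ - y - μ = -(y - μ) := by abel
  rw [h, Matrix.mulVec_neg, dotProduct_neg]

/-! ### Bounds -/

lemma pow_exp_bound (p : ℕ) {u q : ℝ} (hq : 0 < q) (hu : 0 ≤ u) :
    u ^ p * Real.exp (-(u * q / 2)) ≤ (p.factorial : ℝ) * (2 / q) ^ p := by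
  set x := u * q / 2 with hx
  have hx0 : 0 ≤ x := by positivity
  have hxp : x ^ p ≤ (p.factorial : ℝ) * Real.exp x := by
    have h1 : x ^ p / (p.factorial : ℝ) ≤ Real.exp x := by
      calc x ^ p / (p.factorial : ℝ)
          ≤ ∑ i ∈ Finset.range (p+1), x ^ i / (i.factorial : ℝ) := by
            refine Finset.single_le_sum (f := fun i => x ^ i / (i.factorial : ℝ)) ?_
              (Finset.self_mem_range_succ p)
            intro i _
            positivity
        _ ≤ Real.exp x := Real.sum_le_exp_of_nonneg hx0 _
    have hfac : (0:ℝ) < (p.factorial : ℝ) := by positivity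
    calc x ^ p = x ^ p / (p.factorial : ℝ) * (p.factorial : ℝ) := by field_simp
      _ ≤ Real.exp x * (p.factorial : ℝ) := by gcongr
      _ = (p.factorial : ℝ) * Real.exp x := by ring
  have hu_eq : u = 2 / q * x := by rw [hx]; field_simp
  calc u ^ p * Real.exp (-x) = (2/q)^p * (x ^ p * Real.exp (-x)) := by rw [hu_eq, mul_pow]; ring
    _ ≤ (2/q)^p * ((p.factorial : ℝ) * Real.exp x * Real.exp (-x)) := by
        have h2 : (0:ℝ) ≤ (2/q)^p := by positivity
        have h3 : 0 ≤ Real.exp (-x) := Real.exp_nonneg _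
        nlinarith [mul_le_mul_of_nonneg_right hxp h3, Real.exp_nonneg x]
    _ = (p.factorial : ℝ) * (2 / q) ^ p := by
        rw [mul_assoc, ← Real.exp_add, add_neg_cancel, Real.exp_zero, mul_one]; ring

lemma sqrt_le_one_add (w : ℝ) (hw : 0 ≤ w) : Real.sqrt w ≤ 1 + w := by
  have h : w ≤ (1 + w)^2 := by nlinarith
  calc Real.sqrt w ≤ Real.sqrt ((1+w)^2) := Real.sqrt_le_sqrt h
    _ = 1 + w := Real.sqrt_sq (by linarith)

lemma rpow_smul_det {p : ℕ} {u d : ℝ} (hu : 0 < u) (hd : 0 < d) :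
    ((u⁻¹)^p * d) ^ (-(1:ℝ)/2) = Real.sqrt (u^p) * d ^ (-(1:ℝ)/2) := by
  rw [Real.mul_rpow (by positivity) hd.le]
  congr 1
  have h1 : (u⁻¹ ^ p : ℝ) = (u ^ p)⁻¹ := by rw [inv_pow]
  rw [h1, Real.sqrt_eq_rpow,
    show ((u^p)⁻¹ : ℝ) ^ (-(1:ℝ)/2) = ((u^p) ^ (-(1:ℝ)/2))⁻¹ from Real.inv_rpow (by positivity) _,
    ← Real.rpow_neg (by positivity)]
  norm_num

/-! ### Integrability -/

lemma measurable_gauss_u {p : ℕ} (hp : 0 < p) (μ : Fin p → ℝ) (S : Matrix (Fin p) (Fin p) ℝ)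
    (hS : S.PosDef) (y : Fin p → ℝ) :
    Measurable (fun u : ℝ => gaussPdf μ (u⁻¹ • S) y) := by
  have h : (fun u : ℝ => gaussPdf μ (u⁻¹ • S) y)
      = fun u => (2 * Real.pi) ^ (-(p : ℝ) / 2) * ((u⁻¹)^p * S.det) ^ (-(1 : ℝ) / 2) *
        Real.exp (-(1 / 2) * (u * ((y - μ) ⬝ᵥ (S⁻¹ *ᵥ (y - μ))))) :=
    funext (gaussPdf_formula hp μ S hS · y)
  rw [h]
  have m1 : Measurable (fun u : ℝ => ((u⁻¹)^p * S.det) ^ (-(1:ℝ)/2)) := by fun_prop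
  have m2 : Measurable (fun u : ℝ =>
      Real.exp (-(1 / 2) * (u * ((y - μ) ⬝ᵥ (S⁻¹ *ᵥ (y - μ)))))) :=
    ((measurable_id.mul_const _).const_mul _).exp
  exact (measurable_const.mul m1).mul m2

lemma ae_pos_of_H (H : Measure ℝ) (hH : H (Set.Iic 0) = 0) : ∀ᵐ u ∂H, 0 < u := by
  rw [ae_iff]
  convert hH using 2
  ext u
  simp [not_lt]

lemma integrable_gauss_u {p : ℕ} (hp : 0 < p) (μ : Fin p → ℝ) (S : Matrix (Fin p) (Fin p) ℝ)
    (hS : S.PosDef) (H : Measure ℝ) [IsProbabilityMeasure H]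
    (hH : H (Set.Iic 0) = 0) (y : Fin p → ℝ)
    (hq : 0 < (y - μ) ⬝ᵥ (S⁻¹ *ᵥ (y - μ))) :
    Integrable (fun u : ℝ => gaussPdf μ (u⁻¹ • S) y) H := by
  set q : ℝ := (y - μ) ⬝ᵥ (S⁻¹ *ᵥ (y - μ)) with hqdef
  set C : ℝ := (2 * Real.pi) ^ (-(p : ℝ) / 2) with hC
  set M : ℝ := C * (S.det ^ (-(1:ℝ)/2) * (1 + (p.factorial : ℝ) * (2/q)^p)) with hM
  refine Integrable.mono' (integrable_const M)
    ((measurable_gauss_u hp μ S hS y).aestronglyMeasurable) ?_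
  filter_upwards [ae_pos_of_H H hH] with u hu
  rw [Real.norm_eq_abs, abs_of_nonneg (gaussPdf_nonneg _ _ _), gaussPdf_formula hp μ S hS u y,
    ← hqdef, ← hC, rpow_smul_det hu hS.det_pos]
  have hC0 : 0 ≤ C := Real.rpow_nonneg (by positivity) _
  have hd0 : (0:ℝ) ≤ S.det ^ (-(1:ℝ)/2) := rpow_neg_half_nonneg _
  have h1 : Real.sqrt (u^p) ≤ 1 + u^p := sqrt_le_one_add _ (by positivity)
  have h2 : Real.exp (-(1/2) * (u * q)) = Real.exp (-(u * q / 2)) := by ring_nf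
  have h3 : Real.exp (-(u * q / 2)) ≤ 1 := by
    rw [Real.exp_le_one_iff]
    have : 0 ≤ u * q / 2 := by positivity
    linarith
  have h4 : u ^ p * Real.exp (-(u * q / 2)) ≤ (p.factorial : ℝ) * (2 / q) ^ p :=
    pow_exp_bound p hq hu.le
  have hexp0 : 0 ≤ Real.exp (-(u * q / 2)) := Real.exp_nonneg _
  calc C * (Real.sqrt (u^p) * S.det ^ (-(1:ℝ)/2)) * Real.exp (-(1/2) * (u * q))
      = C * (S.det ^ (-(1:ℝ)/2) * (Real.sqrt (u^p) * Real.exp (-(u * q / 2)))) := by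
        rw [h2]; ring
    _ ≤ C * (S.det ^ (-(1:ℝ)/2) * (1 + (p.factorial : ℝ) * (2/q)^p)) := by
        have h5 : Real.sqrt (u^p) * Real.exp (-(u * q / 2))
            ≤ 1 + (p.factorial : ℝ) * (2/q)^p := by
          calc Real.sqrt (u^p) * Real.exp (-(u * q / 2))
              ≤ (1 + u^p) * Real.exp (-(u * q / 2)) := by
                exact mul_le_mul_of_nonneg_right h1 hexp0
            _ = Real.exp (-(u * q / 2)) + u^p * Real.exp (-(u * q / 2)) := by ring
            _ ≤ 1 + (p.factorial : ℝ) * (2/q)^p := add_le_add h3 h4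
        exact mul_le_mul_of_nonneg_left (mul_le_mul_of_nonneg_left h5 hd0) hC0
    _ = M := hM.symm

lemma integrable_gauss_cdf_u {p : ℕ} (hp : 0 < p) (μ : Fin p → ℝ) (S : Matrix (Fin p) (Fin p) ℝ)
    (hS : S.PosDef) (H : Measure ℝ) [IsProbabilityMeasure H]
    (hH : H (Set.Iic 0) = 0) (y : Fin p → ℝ)
    (hq : 0 < (y - μ) ⬝ᵥ (S⁻¹ *ᵥ (y - μ))) (a : ℝ → ℝ) (ha : Measurable a) :
    Integrable (fun u : ℝ => gaussPdf μ (u⁻¹ • S) y * stdNormCdf (a u)) H := by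
  refine Integrable.mono' (integrable_gauss_u hp μ S hS H hH y hq)
    ((measurable_gauss_u hp μ S hS y).mul (measurable_stdNormCdf.comp ha)).aestronglyMeasurable
    ?_
  filter_upwards with u
  rw [Real.norm_eq_abs, abs_of_nonneg (mul_nonneg (gaussPdf_nonneg _ _ _) (stdNormCdf_nonneg _))]
  calc gaussPdf μ (u⁻¹ • S) y * stdNormCdf (a u)
      ≤ gaussPdf μ (u⁻¹ • S) y * 1 :=
        mul_le_mul_of_nonneg_left (stdNormCdf_le_one _) (gaussPdf_nonneg _ _ _)
    _ = gaussPdf μ (u⁻¹ • S) y := mul_one _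

/-! ### The key pointwise identity -/

lemma key_identity {p : ℕ} (hp : 0 < p) (μ lam : Fin p → ℝ) (S : Matrix (Fin p) (Fin p) ℝ)
    (hS : S.PosDef) (H : Measure ℝ) [IsProbabilityMeasure H] (hH : H (Set.Iic 0) = 0)
    (y : Fin p → ℝ) (hq : 0 < (y - μ) ⬝ᵥ (S⁻¹ *ᵥ (y - μ))) :
    smsnPdf μ lam S hS H y + smsnPdf μ lam S hS H (μ + μ - y) = 2 * smnPdf μ S H y := by
  set B := ((hS.posSemidef.1.eigenvectorUnitary : Matrix (Fin p) (Fin p) ℝ) *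
        diagonal (fun i => Real.sqrt (hS.posSemidef.1.eigenvalues i)) *
        star (hS.posSemidef.1.eigenvectorUnitary : Matrix (Fin p) (Fin p) ℝ))⁻¹ with hB
  set c : ℝ := lam ⬝ᵥ (B *ᵥ (y - μ)) with hc
  have ha1 : Measurable (fun u : ℝ => Real.sqrt u * c) :=
    Real.continuous_sqrt.measurable.mul_const c
  have ha2 : Measurable (fun u : ℝ => -(Real.sqrt u * c)) := ha1.neg
  have hrefl : ∀ u : ℝ, gaussPdf μ (u⁻¹ • S) (μ + μ - y) *
      stdNormCdf (Real.sqrt u * (lam ⬝ᵥ (B *ᵥ (μ + μ - y - μ))))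
      = gaussPdf μ (u⁻¹ • S) y * stdNormCdf (-(Real.sqrt u * c)) := by
    intro u
    rw [gaussPdf_reflect, reflect_sub, mul_neg, hc]
  unfold smsnPdf smnPdf
  rw [← hB, ← hc]
  simp only [hrefl]
  have hI1 := integrable_gauss_cdf_u hp μ S hS H hH y hq _ ha1
  have hI2 := integrable_gauss_cdf_u hp μ S hS H hH y hq _ ha2
  rw [← mul_add, ← integral_add hI1 hI2]
  congr 1
  refine integral_congr_ae ?_
  filter_upwards with u
  have hsum := stdNormCdf_add_neg (Real.sqrt u * c)
  calc gaussPdf μ (u⁻¹ • S) y * stdNormCdf (Real.sqrt u * c)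
        + gaussPdf μ (u⁻¹ • S) y * stdNormCdf (-(Real.sqrt u * c))
      = gaussPdf μ (u⁻¹ • S) y *
          (stdNormCdf (Real.sqrt u * c) + stdNormCdf (-(Real.sqrt u * c))) := by ring
    _ = gaussPdf μ (u⁻¹ • S) y := by rw [hsum, mul_one]

/-! ### Nonnegativity and measurability of the densities -/

lemma smsnPdf_nonneg {p : ℕ} (μ lam : Fin p → ℝ) (S : Matrix (Fin p) (Fin p) ℝ)
    (hS : S.PosDef) (H : Measure ℝ) (y : Fin p → ℝ) : 0 ≤ smsnPdf μ lam S hS H y := by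
  unfold smsnPdf
  have : 0 ≤ ∫ u, gaussPdf μ (u⁻¹ • S) y *
      stdNormCdf (Real.sqrt u * (lam ⬝ᵥ (((hS.posSemidef.1.eigenvectorUnitary : Matrix (Fin p) (Fin p) ℝ) *
        diagonal (fun i => Real.sqrt (hS.posSemidef.1.eigenvalues i)) *
        star (hS.posSemidef.1.eigenvectorUnitary : Matrix (Fin p) (Fin p) ℝ))⁻¹ *ᵥ (y - μ)))) ∂H :=
    integral_nonneg fun u => mul_nonneg (gaussPdf_nonneg _ _ _) (stdNormCdf_nonneg _)
  linarith

lemma smnPdf_nonneg {p : ℕ} (μ : Fin p → ℝ) (S : Matrix (Fin p) (Fin p) ℝ)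
    (H : Measure ℝ) (y : Fin p → ℝ) : 0 ≤ smnPdf μ S H y :=
  integral_nonneg fun u => gaussPdf_nonneg _ _ _

lemma measurable_Q {p : ℕ} (μ : Fin p → ℝ) (S : Matrix (Fin p) (Fin p) ℝ) :
    Measurable (fun y : Fin p → ℝ => (y - μ) ⬝ᵥ (S⁻¹ *ᵥ (y - μ))) := by
  simp only [dotProduct, Matrix.mulVec]
  fun_prop

lemma measurable_gauss_joint {p : ℕ} (hp : 0 < p) (μ : Fin p → ℝ)
    (S : Matrix (Fin p) (Fin p) ℝ) (hS : S.PosDef) :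
    Measurable (fun z : (Fin p → ℝ) × ℝ => gaussPdf μ (z.2⁻¹ • S) z.1) := by
  have h : (fun z : (Fin p → ℝ) × ℝ => gaussPdf μ (z.2⁻¹ • S) z.1)
      = fun z => (2 * Real.pi) ^ (-(p : ℝ) / 2) * ((z.2⁻¹)^p * S.det) ^ (-(1 : ℝ) / 2) *
        Real.exp (-(1 / 2) * (z.2 * ((z.1 - μ) ⬝ᵥ (S⁻¹ *ᵥ (z.1 - μ))))) :=
    funext fun z => gaussPdf_formula hp μ S hS z.2 z.1
  rw [h]
  have hQ : Measurable (fun y : Fin p → ℝ => (y - μ) ⬝ᵥ (S⁻¹ *ᵥ (y - μ))) := measurable_Q μ S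
  have m1 : Measurable (fun z : (Fin p → ℝ) × ℝ => ((z.2⁻¹)^p * S.det) ^ (-(1:ℝ)/2)) := by
    fun_prop
  have m2 : Measurable (fun z : (Fin p → ℝ) × ℝ =>
      Real.exp (-(1 / 2) * (z.2 * ((z.1 - μ) ⬝ᵥ (S⁻¹ *ᵥ (z.1 - μ)))))) :=
    ((measurable_snd.mul (hQ.comp measurable_fst)).const_mul _).exp
  exact (measurable_const.mul m1).mul m2

lemma measurable_smsnPdf {p : ℕ} (hp : 0 < p) (μ lam : Fin p → ℝ)
    (S : Matrix (Fin p) (Fin p) ℝ) (hS : S.PosDef) (H : Measure ℝ) [IsProbabilityMeasure H] :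
    Measurable (smsnPdf μ lam S hS H) := by
  set B := ((hS.posSemidef.1.eigenvectorUnitary : Matrix (Fin p) (Fin p) ℝ) *
        diagonal (fun i => Real.sqrt (hS.posSemidef.1.eigenvalues i)) *
        star (hS.posSemidef.1.eigenvectorUnitary : Matrix (Fin p) (Fin p) ℝ))⁻¹ with hB
  have hc : Measurable (fun y : Fin p → ℝ => lam ⬝ᵥ (B *ᵥ (y - μ))) := by
    simp only [dotProduct, Matrix.mulVec]
    fun_prop
  have hK : Measurable (fun z : (Fin p → ℝ) × ℝ => gaussPdf μ (z.2⁻¹ • S) z.1 *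
      stdNormCdf (Real.sqrt z.2 * (lam ⬝ᵥ (B *ᵥ (z.1 - μ))))) := by
    refine (measurable_gauss_joint hp μ S hS).mul (measurable_stdNormCdf.comp ?_)
    exact (Real.continuous_sqrt.measurable.comp measurable_snd).mul (hc.comp measurable_fst)
  have hint : Measurable (fun y : Fin p → ℝ => ∫ u, gaussPdf μ (u⁻¹ • S) y *
      stdNormCdf (Real.sqrt u * (lam ⬝ᵥ (B *ᵥ (y - μ)))) ∂H) :=
    hK.stronglyMeasurable.integral_prod_right'.measurable
  exact hint.const_mul 2

lemma measurable_smnPdf {p : ℕ} (hp : 0 < p) (μ : Fin p → ℝ)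
    (S : Matrix (Fin p) (Fin p) ℝ) (hS : S.PosDef) (H : Measure ℝ) [IsProbabilityMeasure H] :
    Measurable (smnPdf μ S H) :=
  (measurable_gauss_joint hp μ S hS).stronglyMeasurable.integral_prod_right'.measurable

theorem stmt6 (p : ℕ) (hp : 0 < p) (μ lam : Fin p → ℝ)
    (S : Matrix (Fin p) (Fin p) ℝ) (hS : S.PosDef)
    (H : Measure ℝ) [IsProbabilityMeasure H] (hH : H (Set.Iic 0) = 0) :
    Measure.map (fun y => (y - μ) ⬝ᵥ (S⁻¹ *ᵥ (y - μ)))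
        (volume.withDensity fun y => ENNReal.ofReal (smsnPdf μ lam S hS H y))
      = Measure.map (fun x => (x - μ) ⬝ᵥ (S⁻¹ *ᵥ (x - μ)))
        (volume.withDensity fun y => ENNReal.ofReal (smnPdf μ S H y)) := by
  have hne : Nonempty (Fin p) := Fin.pos_iff_nonempty.mp hp
  set Q : (Fin p → ℝ) → ℝ := fun y => (y - μ) ⬝ᵥ (S⁻¹ *ᵥ (y - μ)) with hQdef
  have mQ : Measurable Q := measurable_Q μ S
  set T : (Fin p → ℝ) → (Fin p → ℝ) := fun y => μ + μ - y with hTdef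
  have hT : MeasurePreserving T volume volume := Measure.measurePreserving_sub_left volume (μ + μ)
  have hTemb : MeasurableEmbedding T := (MeasurableEquiv.subLeft (μ + μ)).measurableEmbedding
  have hQT : ∀ y, Q (T y) = Q y := by
    intro y
    show (μ + μ - y - μ) ⬝ᵥ (S⁻¹ *ᵥ (μ + μ - y - μ)) = _
    have h : μ + μ - y - μ = -(y - μ) := by abel
    rw [h, Matrix.mulVec_neg, neg_dotProduct, dotProduct_neg, neg_neg]
  set F : (Fin p → ℝ) → ENNReal := fun y => ENNReal.ofReal (smsnPdf μ lam S hS H y) with hFdef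
  set G : (Fin p → ℝ) → ENNReal := fun y => ENNReal.ofReal (smnPdf μ S H y) with hGdef
  have hF : Measurable F := (measurable_smsnPdf hp μ lam S hS H).ennreal_ofReal
  have hG : Measurable G := (measurable_smnPdf hp μ S hS H).ennreal_ofReal
  have key : ∀ᵐ y : Fin p → ℝ, F y + F (T y) = 2 * G y := by
    have hsing : (volume : Measure (Fin p → ℝ)) {μ} = 0 := measure_singleton μ
    rw [ae_iff]
    refine measure_mono_null ?_ hsing
    intro y hy
    simp only [mem_setOf_eq] at hy
    simp only [mem_singleton_iff]
    by_contra hne'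
    apply hy
    have hsub : y - μ ≠ 0 := sub_ne_zero.mpr hne'
    have hq : 0 < Q y := by
      have := (hS.inv).dotProduct_mulVec_pos hsub
      simpa [hQdef] using this
    have hkey := key_identity hp μ lam S hS H hH y hq
    rw [hFdef, hGdef]
    simp only
    rw [← ENNReal.ofReal_add (smsnPdf_nonneg _ _ _ _ _ _) (smsnPdf_nonneg _ _ _ _ _ _), hkey,
      ENNReal.ofReal_mul (by norm_num : (0:ℝ) ≤ 2)]
    norm_num
  ext s hs
  rw [Measure.map_apply mQ hs, Measure.map_apply mQ hs, withDensity_apply _ (mQ hs),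
    withDensity_apply _ (mQ hs)]
  set A : Set (Fin p → ℝ) := Q ⁻¹' s with hAdef
  have hTA : T ⁻¹' A = A := by
    ext y
    simp only [hAdef, mem_preimage, hQT]
  have hCoV : ∫⁻ y in A, F (T y) ∂volume = ∫⁻ y in A, F y ∂volume := by
    have h := hT.setLIntegral_comp_preimage_emb hTemb F A
    rwa [hTA] at h
  have h2 : (2:ENNReal) * ∫⁻ y in A, F y ∂volume = 2 * ∫⁻ y in A, G y ∂volume := by
    calc (2:ENNReal) * ∫⁻ y in A, F y ∂volume
        = (∫⁻ y in A, F y ∂volume) + ∫⁻ y in A, F (T y) ∂volume := by rw [hCoV, two_mul]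
      _ = ∫⁻ y in A, (F y + F (T y)) ∂volume :=
          (lintegral_add_left hF _).symm
      _ = ∫⁻ y in A, 2 * G y ∂volume := lintegral_congr_ae (ae_restrict_of_ae key)
      _ = 2 * ∫⁻ y in A, G y ∂volume := lintegral_const_mul 2 hG
  exact (ENNReal.mul_right_inj (by norm_num) (by norm_num)).mp h2
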